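/- If a topological space X is a union X = Z ∪ ⋃_i U_i where each U_i is open in X and Z is the set of points not in any U_i, then for every ordinal α we have X^(α) = (X^(α) ∩ Z) ∪ ⋃_i (U_i)^(α), where (U_i)^(α) is computed in the subspace topology on U_i. -/

import Mathlib

open Topology Filter Set

/-- Cantor-Bendixson derivative of a set: the points of `A` that are not
isolated in the subspace topology of `A`, i.e. accumulation points of `A`. -/
def cbd {X : Type*} [TopologicalSpace X] (A : Set X) : Set X :=
  {x ∈ A | AccPt x (Filter.principal A)}

/-- Iterated Cantor-Bendixson derivative. -/
noncomputable def cbIter {X : Type*} [TopologicalSpace X] (A : Set X) (o : Ordinal) : Set X :=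
  Ordinal.limitRecOn o A (fun _ ih => cbd ih)
    (fun o _ ih => ⋂ (b : Set.Iio o), ih b.1 b.2)

/-! Being non-isolated is a local property, so the Cantor-Bendixson derivative commutes with
intersecting by an open set; by transfinite induction so do its iterates, and the theorem is
the resulting identity `U^(α) = X^(α) ∩ U` summed over the cover `Z ∪ ⋃ i, U i` of `X`. -/

section CantorBendixson

variable {X : Type*} [TopologicalSpace X]

lemma cbIter_zero (A : Set X) : cbIter A 0 = A :=
  Ordinal.limitRecOn_zero ..

lemma cbIter_add_one (A : Set X) (o : Ordinal) : cbIter A (o + 1) = cbd (cbIter A o) :=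
  Ordinal.limitRecOn_add_one ..

lemma cbIter_limit (A : Set X) {o : Ordinal} (ho : Order.IsSuccLimit o) :
    cbIter A o = ⋂ b : Set.Iio o, cbIter A b.1 :=
  Ordinal.limitRecOn_limit _ _ _ _ ho

lemma accPt_principal_inter_of_mem_nhds {x : X} {A U : Set X} (hU : U ∈ 𝓝 x) :
    AccPt x (𝓟 (A ∩ U)) ↔ AccPt x (𝓟 A) := by
  simp only [accPt_iff_frequently]
  exact ⟨fun h => h.mono fun _ hy => ⟨hy.1, hy.2.1⟩,
    fun h => (h.and_eventually hU).mono fun _ hy => ⟨hy.1.1, hy.1.2, hy.2⟩⟩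

lemma cbd_inter_isOpen (A : Set X) {U : Set X} (hU : IsOpen U) :
    cbd (A ∩ U) = cbd A ∩ U := by
  ext x
  simp only [cbd, mem_inter_iff, mem_sep_iff]
  constructor
  · rintro ⟨⟨hxA, hxU⟩, hacc⟩
    exact ⟨⟨hxA, (accPt_principal_inter_of_mem_nhds (hU.mem_nhds hxU)).1 hacc⟩, hxU⟩
  · rintro ⟨⟨hxA, hacc⟩, hxU⟩
    exact ⟨⟨hxA, hxU⟩, (accPt_principal_inter_of_mem_nhds (hU.mem_nhds hxU)).2 hacc⟩

lemma cbIter_inter_isOpen (A : Set X) {U : Set X} (hU : IsOpen U) (α : Ordinal) :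
    cbIter (A ∩ U) α = cbIter A α ∩ U := by
  induction α using Ordinal.limitRecOn with
  | zero => rw [cbIter_zero, cbIter_zero]
  | add_one o ih =>
    rw [cbIter_add_one, cbIter_add_one, ih, cbd_inter_isOpen _ hU]
  | limit o ho ih =>
    have : Nonempty (Iio o) := ⟨⟨0, ho.pos⟩⟩
    rw [cbIter_limit _ ho, cbIter_limit _ ho, iInter_inter]
    exact iInter_congr fun b => ih b.1 b.2

lemma cbIter_of_isOpen {U : Set X} (hU : IsOpen U) (α : Ordinal) :
    cbIter U α = cbIter univ α ∩ U := by
  rw [← cbIter_inter_isOpen _ hU, univ_inter]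

end CantorBendixson

/-- If X = Z ∪ ⋃ i, U i with each U i open and Z the set of points in no U i, then
X^(α) = (X^(α) ∩ Z) ∪ ⋃ i, (U i)^(α). -/
theorem cbIter_decomposition {X : Type*} [TopologicalSpace X] {ι : Type*}
    (U : ι → Set X) (hU : ∀ i, IsOpen (U i)) (Z : Set X)
    (hZ : Z = {x : X | ∀ i, x ∉ U i}) (α : Ordinal) :
    cbIter (Set.univ : Set X) α =
      (cbIter (Set.univ : Set X) α ∩ Z) ∪ ⋃ i, cbIter (U i) α := by
  have hcover : Z ∪ ⋃ i, U i = univ := by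
    subst hZ
    ext x
    simpa only [mem_union, mem_ofPred_eq, mem_iUnion, mem_univ, iff_true] using
      (em' (∃ i, x ∈ U i)).imp_left not_exists.1
  simp_rw [cbIter_of_isOpen (hU _), ← inter_iUnion, ← inter_union_distrib_left, hcover,
    inter_univ]
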